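/- In Case 1 (a > −(α̂/4)·r), the set 𝓓 is nonempty: 0 ∈ 𝓓, and moreover there exists β̃₁ > 0 such that [0, β̃₁] ⊆ 𝓓. In Case 2 (a ≤ −(α̂/4)·r), there exists β̃₂ > β̲₂ such that (β̲₂, β̃₂] ⊆ 𝓓. -/

import Mathlib

/-!
At a critical point `y > 0` of `v` the equation gives `(σ²/2) v''(y) = η v(y) - h`, so `v'` can
only turn from negative to nonnegative at a level `v ≥ h/η`. The level `h/η` itself is excluded:
`v' = 0` there forces the constant `h/η` to be a solution, and Grönwall's inequality keeps `v`
strictly below it. Above `h/η` a zero of `v'` would start an increasing branch on which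
eventually `v' ≥ c v²`, and such a solution blows up in finite time. Hence once `v'` is negative
it stays negative, and `β ∈ 𝓓` as soon as `v'` takes a negative value.

In Case 1, if `v' ≥ 0` throughout then `v ≥ -r`; while `v ≤ 0` the term `-h y` eventually
makes `v'` negative; and since `v` climbs at bounded speed, it needs a time bounded below to
reach `0`, at which point `(σ²/2) v' = β - h y < 0` for small `β`. In Case 2,
`v'(0) = (2/σ²)(β - β̲₂)` is small, and as long as `v'` and `v + r` stay small we have
`v'' ≤ -h/(2σ²)`, so `v'` turns negative before `v` has moved.
-/

open Set Filter

noncomputable section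

/-- `IsIVP σ η αh h r a β v v'` says that `v : [0,∞) → ℝ` is a C¹ solution
(with derivative `v'`) of the initial value problem IVP(β):
`(σ²/2)·v′(y) = β + (αh/4)·v(y)² + η·y·(v(y) − h/η) − a·v(y)` for `y ≥ 0`, `v(0) = −r`. -/
def IsIVP (σ η αh h r a β : ℝ) (v v' : ℝ → ℝ) : Prop :=
  ContinuousOn v' (Set.Ici 0) ∧
  (∀ y ∈ Set.Ici (0:ℝ), HasDerivWithinAt v (v' y) (Set.Ici 0) y) ∧
  (∀ y ∈ Set.Ici (0:ℝ),
    σ ^ 2 / 2 * v' y = β + αh / 4 * (v y) ^ 2 + η * y * (v y - h / η) - a * v y) ∧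
  v 0 = -r

/-- `β ∈ 𝓓`: every solution of IVP(β) is nondecreasing on `[0, x_β]` and
strictly decreasing on `[x_β, ∞)` for some `x_β ≥ 0`. -/
def MemD (σ η αh h r a β : ℝ) : Prop :=
  ∀ v v' : ℝ → ℝ, IsIVP σ η αh h r a β v v' →
    ∃ xβ, 0 ≤ xβ ∧ MonotoneOn v (Set.Icc 0 xβ) ∧ StrictAntiOn v (Set.Ici xβ)

/-- `β ∈ 𝓘`: every solution of IVP(β) is nondecreasing on `[0, ∞)`. -/
def MemI (σ η αh h r a β : ℝ) : Prop :=
  ∀ v v' : ℝ → ℝ, IsIVP σ η αh h r a β v v' → MonotoneOn v (Set.Ici 0)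

open Topology

section RealCalculus

variable {f f' : ℝ → ℝ} {a b c d : ℝ}

theorem monotoneOn_Icc_of_hasDerivAt_nonneg (hf : ContinuousOn f (Icc a b))
    (hf' : ∀ x ∈ Ioo a b, HasDerivAt f (f' x) x) (hf'₀ : ∀ x ∈ Ioo a b, 0 ≤ f' x) :
    MonotoneOn f (Icc a b) :=
  monotoneOn_of_hasDerivWithinAt_nonneg (convex_Icc a b) hf
    (by simpa using fun x hx => (hf' x hx).hasDerivWithinAt) (by simpa using hf'₀)

theorem monotoneOn_Ici_of_hasDerivAt_nonneg (hf : ContinuousOn f (Ici a))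
    (hf' : ∀ x ∈ Ioi a, HasDerivAt f (f' x) x) (hf'₀ : ∀ x ∈ Ioi a, 0 ≤ f' x) :
    MonotoneOn f (Ici a) :=
  monotoneOn_of_hasDerivWithinAt_nonneg (convex_Ici a) hf
    (by simpa using fun x hx => (hf' x hx).hasDerivWithinAt) (by simpa using hf'₀)

theorem image_sub_le_mul_sub_of_hasDerivAt_le (hab : a ≤ b) (hf : ContinuousOn f (Icc a b))
    (hf' : ∀ x ∈ Ioo a b, HasDerivAt f (f' x) x) (hf'C : ∀ x ∈ Ioo a b, f' x ≤ c) :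
    f b - f a ≤ c * (b - a) := by
  have hg : MonotoneOn (fun x => c * x - f x) (Icc a b) :=
    monotoneOn_Icc_of_hasDerivAt_nonneg ((continuousOn_const.mul continuousOn_id).sub hf)
      (fun x hx => ((hasDerivAt_id x).const_mul c).sub (hf' x hx))
      (fun x hx => by simpa using hf'C x hx)
  have := hg (left_mem_Icc.2 hab) (right_mem_Icc.2 hab) hab
  simp only at this
  linarith

theorem exists_first_root (hab : a ≤ b) (hf : ContinuousOn f (Icc a b)) (ha : f a < 0)
    (hb : 0 ≤ f b) : ∃ c ∈ Ioc a b, f c = 0 ∧ ∀ x ∈ Ico a c, f x < 0 := by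
  set S := Icc a b ∩ f ⁻¹' Ici 0
  have hbdd : BddBelow S := ⟨a, fun x hx => hx.1.1⟩
  obtain ⟨⟨hac, hcb⟩, hc⟩ : sInf S ∈ S :=
    (hf.preimage_isClosed_of_isClosed isClosed_Icc isClosed_Ici).csInf_mem
      ⟨b, right_mem_Icc.2 hab, hb⟩ hbdd
  have hlt : ∀ x ∈ Ico a (sInf S), f x < 0 := fun x hx =>
    not_le.1 fun hx' => (csInf_le hbdd ⟨⟨hx.1, hx.2.le.trans hcb⟩, hx'⟩).not_gt hx.2
  have hac' : a < sInf S := hac.lt_of_ne fun he => (he ▸ ha).not_ge hc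
  refine ⟨sInf S, ⟨hac', hcb⟩, le_antisymm ?_ hc, hlt⟩
  have hcl : sInf S ∈ closure (Ico a (sInf S)) := by
    rw [closure_Ico hac'.ne]
    exact right_mem_Icc.2 hac'.le
  exact ContinuousWithinAt.closure_le hcl
    ((hf _ ⟨hac, hcb⟩).mono fun x hx => ⟨hx.1, hx.2.le.trans hcb⟩) continuousWithinAt_const
    fun x hx => (hlt x hx).le

theorem HasDerivAt.nonneg_of_forall_Ico_lt (hf : HasDerivAt f d c) (hac : a < c)
    (hlt : ∀ x ∈ Ico a c, f x < f c) : 0 ≤ d := by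
  refine ge_of_tendsto ((hasDerivAt_iff_tendsto_slope.1 hf).mono_left (nhdsLT_le_nhdsNE c)) ?_
  filter_upwards [Ioo_mem_nhdsLT hac] with x hx
  rw [slope_def_field]
  exact div_nonneg_of_nonpos (by linarith [hlt x ⟨hx.1.le, hx.2⟩]) (by linarith [hx.2])

theorem HasDerivAt.eventually_lt_of_pos (hf : HasDerivAt f d c) (hd : 0 < d) :
    ∀ᶠ x in 𝓝[>] c, f c < f x := by
  filter_upwards [((hasDerivAt_iff_tendsto_slope.1 hf).mono_left
    (nhdsGT_le_nhdsNE c)).eventually_const_lt hd, self_mem_nhdsWithin] with x hs hx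
  rw [slope_def_field, div_pos_iff_of_pos_right (sub_pos.2 hx)] at hs
  linarith

theorem neg_of_hasDerivAt_le_mul {w w' g : ℝ → ℝ} (hab : a ≤ b)
    (hw : ContinuousOn w (Icc a b)) (hw' : ∀ x ∈ Ioo a b, HasDerivAt w (w' x) x)
    (hg : ContinuousOn g (Icc a b))
    (hle : ∀ x ∈ Ioo a b, w' x ≤ g x * w x) (ha : w a < 0) : w b < 0 := by
  by_contra! hb
  obtain ⟨c, ⟨hac, hcb⟩, hc, hneg⟩ := exists_first_root hab hw ha hb
  obtain ⟨C, hC⟩ :=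
    isCompact_Icc.exists_bound_of_continuousOn (hg.mono (Icc_subset_Icc_right hcb))
  -- `w x * exp (C x)` is nonincreasing on `[a, c]` because `g + C ≥ 0` and `w < 0` there
  have hE := image_sub_le_mul_sub_of_hasDerivAt_le (f := fun x => w x * Real.exp (C * x))
    (c := 0) hac.le
    ((hw.mono (Icc_subset_Icc_right hcb)).mul (by fun_prop))
    (fun x hx => (hw' x ⟨hx.1, hx.2.trans_le hcb⟩).mul
      (((hasDerivAt_id x).const_mul C).exp))
    (fun x hx => by
      have hgx := neg_le_of_abs_le (hC x (Ioo_subset_Icc_self hx))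
      have hwx := hneg x ⟨hx.1.le, hx.2⟩
      have := hle x ⟨hx.1, hx.2.trans_le hcb⟩
      have hCw : w' x + C * w x ≤ 0 := by
        nlinarith [mul_nonpos_of_nonneg_of_nonpos (by linarith : 0 ≤ g x + C) hwx.le]
      calc w' x * Real.exp (C * x) + w x * (Real.exp (C * x) * (C * 1))
          = (w' x + C * w x) * Real.exp (C * x) := by ring
        _ ≤ 0 := mul_nonpos_of_nonpos_of_nonneg hCw (Real.exp_pos _).le)
  simp only [hc, zero_mul, zero_sub, neg_le, neg_zero] at hE
  nlinarith [Real.exp_pos (C * a)]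

theorem false_of_forall_mul_sq_le_deriv {q μ : ℝ} (hμ : 0 < μ) (hf : ContinuousOn f (Ici q))
    (hf' : ∀ x ∈ Ioi q, HasDerivAt f (f' x) x) (hq : 0 < f q)
    (hsq : ∀ x ∈ Ioi q, μ * f x ^ 2 ≤ f' x) : False := by
  have hpos : ∀ x ∈ Ici q, 0 < f x := fun x hx =>
    hq.trans_le <| monotoneOn_Ici_of_hasDerivAt_nonneg hf hf'
      (fun y hy => (by positivity : 0 ≤ μ * f y ^ 2).trans (hsq y hy)) (mem_Ici.2 le_rfl) hx hx
  -- `-1/f` grows at least with slope `μ` but stays negative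
  have hg : MonotoneOn (fun x => -(f x)⁻¹ - μ * x) (Ici q) :=
    monotoneOn_Ici_of_hasDerivAt_nonneg (f' := fun x => f' x / f x ^ 2 - μ)
      ((hf.inv₀ fun x hx => (hpos x hx).ne').neg.sub (continuousOn_const.mul continuousOn_id))
      (fun x hx => by
        refine (((hf' x hx).inv (hpos x (Ioi_subset_Ici_self hx)).ne').neg.sub
          ((hasDerivAt_id x).const_mul μ)).congr_deriv ?_
        ring)
      (fun x hx => by
        rw [sub_nonneg, le_div_iff₀ (pow_pos (hpos x (Ioi_subset_Ici_self hx)) 2)]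
        exact hsq x hx)
  set Y := q + (μ * f q)⁻¹
  have hqY : q ≤ Y := le_add_of_nonneg_right (by positivity)
  have hmono := hg (mem_Ici.2 le_rfl) hqY hqY
  have hμY : μ * Y = μ * q + (f q)⁻¹ := by
    simp only [Y]
    field_simp
  have := inv_pos.2 (hpos Y hqY)
  simp only at hmono
  linarith

theorem exists_monotoneOn_Icc_strictAntiOn_Ici {x₀ : ℝ} (hf : ContinuousOn f (Ici x₀))
    (hf' : ∀ x ∈ Ioi x₀, HasDerivAt f (f' x) x) (hneg : ∃ t, x₀ ≤ t ∧ f' t < 0)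
    (hpersist : ∀ t, x₀ ≤ t → f' t < 0 → ∀ y, t < y → f' y < 0) :
    ∃ x, x₀ ≤ x ∧ MonotoneOn f (Icc x₀ x) ∧ StrictAntiOn f (Ici x) := by
  set N := {t | x₀ ≤ t ∧ f' t < 0}
  have hbdd : BddBelow N := ⟨x₀, fun t ht => ht.1⟩
  have hx₀ : x₀ ≤ sInf N := le_csInf hneg fun t ht => ht.1
  refine ⟨sInf N, hx₀, ?_, ?_⟩
  · refine monotoneOn_Icc_of_hasDerivAt_nonneg (hf.mono Icc_subset_Ici_self)
      (fun x hx => hf' x hx.1) fun x hx => ?_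
    exact not_lt.1 fun hx' => (csInf_le hbdd ⟨hx.1.le, hx'⟩).not_gt hx.2
  · refine strictAntiOn_of_hasDerivWithinAt_neg (convex_Ici _) (hf.mono (Ici_subset_Ici.2 hx₀))
      (f' := f') (by simpa using fun x hx => (hf' x (hx₀.trans_lt hx)).hasDerivWithinAt)
      (fun y hy => ?_)
    rw [interior_Ici] at hy
    obtain ⟨t, ht, hty⟩ := exists_lt_of_csInf_lt hneg hy
    exact hpersist t ht.1 ht.2 y hty

theorem exists_deriv_neg_of_deriv_le_neg {u u' u'' : ℝ → ℝ} {A ε δ : ℝ} (hab : a < b)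
    (hu : ContinuousOn u (Icc a b)) (hu' : ContinuousOn u' (Icc a b))
    (hder : ∀ x ∈ Ioo a b, HasDerivAt u (u' x) x)
    (hder' : ∀ x ∈ Ioo a b, HasDerivAt u' (u'' x) x)
    (hconc : ∀ x ∈ Ioo a b, 0 ≤ u' x → u' x < ε → u x < u a + δ → u'' x ≤ -A)
    (hε : u' a < ε) (hA : u' a < A * (b - a)) (hδ : u' a ^ 2 < A * δ) :
    ∃ t ∈ Icc a b, u' t < 0 := by
  by_contra! hnn
  have hA0 : 0 < A := by nlinarith [hnn a (left_mem_Icc.2 hab.le)]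
  set F := fun x => max (u' x - ε) (u x - (u a + δ))
  have hF : ContinuousOn F (Icc a b) :=
    ContinuousOn.sup (hu'.sub continuousOn_const) (hu.sub continuousOn_const)
  -- while `F < 0`, `u'` falls at rate `A` from `u' a`, so this lasts a time at most `u' a / A`,
  -- during which `u` rises by at most `(u' a)² / A < δ`
  have hstep : ∀ c ∈ Ioc a b, (∀ x ∈ Ico a c, F x < 0) →
      A * (c - a) ≤ u' a ∧ F c < 0 := by
    intro c ⟨hac, hcb⟩ hFc
    have hdrop : ∀ x ∈ Icc a c, u' x + A * (x - a) ≤ u' a := by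
      intro x ⟨hax, hxc⟩
      have := image_sub_le_mul_sub_of_hasDerivAt_le (c := -A) hax
        (hu'.mono (Icc_subset_Icc_right (hxc.trans hcb)))
        (fun y hy => hder' y ⟨hy.1, hy.2.trans_le (hxc.trans hcb)⟩)
        (fun y hy => by
          have hFy := hFc y ⟨hy.1.le, hy.2.trans_le hxc⟩
          exact hconc y ⟨hy.1, hy.2.trans_le (hxc.trans hcb)⟩
            (hnn y ⟨hy.1.le, hy.2.le.trans (hxc.trans hcb)⟩)
            (by linarith [le_max_left (u' y - ε) (u y - (u a + δ))])
            (by linarith [le_max_right (u' y - ε) (u y - (u a + δ))]))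
      linarith
    have hc := hdrop c (right_mem_Icc.2 hac.le)
    have hAc : A * (c - a) ≤ u' a := by linarith [hnn c ⟨hac.le, hcb⟩]
    have hrise := image_sub_le_mul_sub_of_hasDerivAt_le (c := u' a) hac.le
      (hu.mono (Icc_subset_Icc_right hcb)) (fun y hy => hder y ⟨hy.1, hy.2.trans_le hcb⟩)
      (fun y hy => by nlinarith [hdrop y (Ioo_subset_Icc_self hy), hy.1])
    have : u' a * (c - a) < δ := by
      refine lt_of_mul_lt_mul_left ?_ hA0.le
      nlinarith [mul_le_mul_of_nonneg_left hAc (hnn a (left_mem_Icc.2 hab.le))]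
    exact ⟨hAc, max_lt (by nlinarith) (by linarith)⟩
  by_cases hall : ∀ x ∈ Icc a b, F x < 0
  · have := hstep b (right_mem_Ioc.2 hab) fun x hx => hall x (Ico_subset_Icc_self hx)
    linarith [this.1]
  push Not at hall
  obtain ⟨x, hx, hFx⟩ := hall
  have hδ0 : 0 < δ := pos_of_mul_pos_right (hδ.trans_le' (sq_nonneg _)) hA0.le
  obtain ⟨c, hc, hFc, hneg⟩ := exists_first_root hx.1 (hF.mono (Icc_subset_Icc_right hx.2))
    (max_lt (by linarith) (by linarith)) hFx
  exact (hstep c ⟨hc.1, hc.2.trans hx.2⟩ hneg).2.ne hFc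

end RealCalculus

namespace IsIVP

variable {σ η αh h r a β : ℝ} {v v' : ℝ → ℝ}

theorem continuousOn (hivp : IsIVP σ η αh h r a β v v') : ContinuousOn v (Ici 0) :=
  fun y hy => (hivp.2.1 y hy).continuousWithinAt

theorem hasDerivAt (hivp : IsIVP σ η αh h r a β v v') {x : ℝ} (hx : 0 < x) :
    HasDerivAt v (v' x) x :=
  (hivp.2.1 x hx.le).hasDerivAt (Ici_mem_nhds hx)

theorem deriv_eq (hσ : 0 < σ) (hivp : IsIVP σ η αh h r a β v v') {y : ℝ} (hy : 0 ≤ y) :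
    v' y = 2 / σ ^ 2 * (β + αh / 4 * v y ^ 2 + η * y * (v y - h / η) - a * v y) := by
  rw [← hivp.2.2.1 y hy]
  field_simp

theorem hasDerivAt_deriv (hσ : 0 < σ) (hη : 0 < η) (hivp : IsIVP σ η αh h r a β v v')
    {x : ℝ} (hx : 0 < x) :
    HasDerivAt v' (2 / σ ^ 2 * (η * v x - h + (αh / 2 * v x + η * x - a) * v' x)) x := by
  have hv := hivp.hasDerivAt hx
  have hrhs := ((((hv.pow 2).const_mul (αh / 4)).const_add β).add
    (((hasDerivAt_id x).const_mul η).mul (hv.sub_const (h / η)))).sub (hv.const_mul a)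
    |>.const_mul (2 / σ ^ 2)
  refine (hrhs.congr_of_eventuallyEq (eventuallyEq_of_mem (Ici_mem_nhds hx)
    fun y hy => hivp.deriv_eq hσ hy)).congr_deriv ?_
  simp only [id]
  field_simp
  ring

theorem hasDerivAt_deriv_of_deriv_eq_zero (hσ : 0 < σ) (hη : 0 < η)
    (hivp : IsIVP σ η αh h r a β v v') {x : ℝ} (hx : 0 < x) (hv'x : v' x = 0) :
    HasDerivAt v' (2 / σ ^ 2 * (η * v x - h)) x := by
  simpa [hv'x] using hivp.hasDerivAt_deriv hσ hη hx

/-- When `β + (αh/4)(h/η)² - a h/η = 0` the constant `h/η` solves the equation, so this is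
a uniqueness statement for the equation, proved by a Grönwall argument. -/
theorem lt_of_le_zero (hσ : 0 < σ) (hη : 0 < η) (hh : 0 < h) (hr : 0 < r)
    (hivp : IsIVP σ η αh h r a β v v') (hK : β + αh / 4 * (h / η) ^ 2 - a * (h / η) ≤ 0)
    {y : ℝ} (hy : 0 ≤ y) : v y < h / η := by
  have hv := hivp.continuousOn.mono (Icc_subset_Ici_self : Icc 0 y ⊆ Ici 0)
  have := neg_of_hasDerivAt_le_mul (w := fun x => v x - h / η)
    (g := fun x => 2 / σ ^ 2 * (αh / 4 * (v x + h / η) + η * x - a)) hy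
    (hv.sub continuousOn_const)
    (fun x hx => (hivp.hasDerivAt hx.1).sub_const _) (by fun_prop)
    (fun x hx => by
      have hsplit : v' x = 2 / σ ^ 2 * (β + αh / 4 * (h / η) ^ 2 - a * (h / η)) +
          2 / σ ^ 2 * (αh / 4 * (v x + h / η) + η * x - a) * (v x - h / η) := by
        rw [hivp.deriv_eq hσ hx.1.le]
        ring
      rw [hsplit]
      have : 2 / σ ^ 2 * (β + αh / 4 * (h / η) ^ 2 - a * (h / η)) ≤ 0 :=
        mul_nonpos_of_nonneg_of_nonpos (by positivity) hK
      linarith)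
    (by simp only [hivp.2.2.2]; linarith [div_pos hh hη])
  linarith

theorem false_of_gt_of_deriv_pos (hσ : 0 < σ) (hη : 0 < η) (hαh : 0 < αh) (hh : 0 < h)
    (hivp : IsIVP σ η αh h r a β v v') {p : ℝ} (hp : 0 ≤ p) (hvp : h / η < v p)
    (hv'p : 0 < v' p) : False := by
  have hv := hivp.continuousOn
  have hsub : Ici p ⊆ Ici 0 := Ici_subset_Ici.2 hp
  -- at a first zero `c` of `v'` after `p` we would have `v c > h/η`, hence `v'' c > 0`
  have hpos : ∀ y, p ≤ y → 0 < v' y := by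
    intro y hpy
    by_contra! hy
    obtain ⟨c, ⟨hpc, hcy⟩, hc, hlt⟩ := exists_first_root (f := fun x => -v' x) hpy
      (hivp.1.mono ((Icc_subset_Ici_self).trans hsub)).neg (by simpa using hv'p)
      (by simpa using hy)
    simp only [neg_eq_zero, Left.neg_neg_iff] at hc hlt
    have hc0 : 0 < c := hp.trans_lt hpc
    have hvc : h / η < v c := hvp.trans_le <|
      monotoneOn_Icc_of_hasDerivAt_nonneg (hv.mono ((Icc_subset_Ici_self).trans hsub))
        (fun x hx => hivp.hasDerivAt (hp.trans_lt hx.1))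
        (fun x hx => (hlt x ⟨hx.1.le, hx.2⟩).le)
        (left_mem_Icc.2 hpc.le) (right_mem_Icc.2 hpc.le) hpc.le
    have hv''c := (hivp.hasDerivAt_deriv_of_deriv_eq_zero hσ hη hc0 hc).neg
      |>.nonneg_of_forall_Ico_lt hpc fun x hx => by simpa [hc] using hlt x hx
    have : h < η * v c := by rwa [div_lt_iff₀' hη] at hvc
    have : 0 < 2 / σ ^ 2 * (η * v c - h) := mul_pos (by positivity) (by linarith)
    linarith
  have hmono : MonotoneOn v (Ici p) := monotoneOn_Ici_of_hasDerivAt_nonneg (hv.mono hsub)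
    (fun x hx => hivp.hasDerivAt (hp.trans_lt hx)) fun x hx => (hpos x (le_of_lt hx)).le
  -- beyond `q`, the linear term `η y (v - h/η)` dominates and `v' ≥ (αh / 4σ²) v²`
  set d := v p - h / η
  have hd : 0 < d := sub_pos.2 hvp
  obtain ⟨q, hpq, hq⟩ : ∃ q, p ≤ q ∧ 2 * a ^ 2 / αh - β ≤ η * d * q :=
    ⟨max p ((2 * a ^ 2 / αh - β) / (η * d)), le_max_left _ _, by
      rw [← div_le_iff₀' (by positivity)]; exact le_max_right _ _⟩
  refine false_of_forall_mul_sq_le_deriv (q := q) (μ := αh / (4 * σ ^ 2)) (by positivity)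
    (hv.mono ((Ici_subset_Ici.2 hpq).trans hsub))
    (fun x hx => hivp.hasDerivAt (hp.trans_lt (hpq.trans_lt hx)))
    (by linarith [div_pos hh hη, hmono (mem_Ici.2 le_rfl) hpq hpq]) fun x hx => ?_
  have hx : q < x := hx
  have hvx : d ≤ v x - h / η := by
    linarith [hmono (mem_Ici.2 le_rfl) (mem_Ici.2 (hpq.trans hx.le)) (hpq.trans hx.le)]
  have hsq : αh / 8 * v x ^ 2 - a * v x + 2 * a ^ 2 / αh = αh / 8 * (v x - 4 * a / αh) ^ 2 := by
    field_simp
    ring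
  have hlin : η * d * q ≤ η * x * (v x - h / η) :=
    calc η * d * q = η * q * d := by ring
      _ ≤ η * x * (v x - h / η) :=
        mul_le_mul (by gcongr) hvx hd.le (by positivity [hp.trans (hpq.trans hx.le)])
  rw [hivp.deriv_eq hσ (hp.trans (hpq.trans hx.le))]
  have : αh / (4 * σ ^ 2) * v x ^ 2 = 2 / σ ^ 2 * (αh / 8 * v x ^ 2) := by
    field_simp
    ring
  rw [this]
  gcongr
  nlinarith [sq_nonneg (v x - 4 * a / αh), hαh]

theorem deriv_neg_of_deriv_neg (hσ : 0 < σ) (hη : 0 < η) (hαh : 0 < αh) (hh : 0 < h)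
    (hr : 0 < r) (hivp : IsIVP σ η αh h r a β v v') {t : ℝ} (ht : 0 ≤ t) (hv't : v' t < 0)
    {y : ℝ} (hty : t < y) : v' y < 0 := by
  by_contra! hy
  obtain ⟨s, ⟨hts, -⟩, hs, hlt⟩ :=
    exists_first_root hty.le (hivp.1.mono fun x hx => ht.trans hx.1) hv't hy
  have hs0 : 0 < s := ht.trans_lt hts
  have hd := hivp.hasDerivAt_deriv_of_deriv_eq_zero hσ hη hs0 hs
  rcases lt_trichotomy (v s) (h / η) with hlow | heq | hhigh
  · have := hd.nonneg_of_forall_Ico_lt hts fun x hx => hs ▸ hlt x hx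
    have : η * v s < h := by rwa [lt_div_iff₀' hη] at hlow
    have : 2 / σ ^ 2 * (η * v s - h) < 0 := mul_neg_of_pos_of_neg (by positivity) (by linarith)
    linarith
  · have hK : β + αh / 4 * (h / η) ^ 2 - a * (h / η) = 0 := by
      have := hivp.2.2.1 s hs0.le
      rw [hs, heq, sub_self, mul_zero, mul_zero, add_zero] at this
      linarith
    exact (hivp.lt_of_le_zero hσ hη hh hr hK.le hs0.le).ne heq
  · have hv''s : 0 < 2 / σ ^ 2 * (η * v s - h) :=
      mul_pos (by positivity) (by rw [div_lt_iff₀' hη] at hhigh; linarith)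
    obtain ⟨u, ⟨hv'u, hvu⟩, hsu⟩ := ((hd.eventually_lt_of_pos hv''s).and
      (nhdsWithin_le_nhds ((hivp.continuousOn.continuousAt (Ici_mem_nhds hs0)).eventually
        (lt_mem_nhds hhigh))) |>.and self_mem_nhdsWithin).exists
    exact hivp.false_of_gt_of_deriv_pos hσ hη hαh hh (hs0.trans hsu).le hvu (hs ▸ hv'u)

theorem le_of_forall_deriv_nonneg (hivp : IsIVP σ η αh h r a β v v')
    (hv' : ∀ t, 0 ≤ t → 0 ≤ v' t) {y : ℝ} (hy : 0 ≤ y) : -r ≤ v y := by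
  rw [← hivp.2.2.2]
  exact monotoneOn_Ici_of_hasDerivAt_nonneg hivp.continuousOn (fun x hx => hivp.hasDerivAt hx)
    (fun x hx => hv' x (le_of_lt hx)) (mem_Ici.2 le_rfl) (mem_Ici.2 hy) hy

theorem deriv_le_of_mem_Icc (hσ : 0 < σ) (hη : 0 < η) (hαh : 0 < αh)
    (hivp : IsIVP σ η αh h r a β v v') {y : ℝ} (hy : 0 ≤ y) (hvy : v y ∈ Icc (-r) 0) :
    v' y ≤ 2 / σ ^ 2 * (β + αh / 4 * r ^ 2 + |a| * r - h * y) := by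
  rw [hivp.deriv_eq hσ hy]
  refine mul_le_mul_of_nonneg_left ?_ (by positivity)
  have : -(a * v y) ≤ |a| * r := by
    calc -(a * v y) ≤ |a * v y| := neg_le_abs _
      _ = |a| * |v y| := abs_mul a (v y)
      _ ≤ |a| * r := by gcongr; exact abs_le.2 ⟨hvy.1, by linarith [hvy.2, hvy.1]⟩
  have : η * y * (v y - h / η) = η * y * v y - h * y := by field_simp
  have : αh / 4 * v y ^ 2 ≤ αh / 4 * r ^ 2 :=
    mul_le_mul_of_nonneg_left (by nlinarith [hvy.1, hvy.2]) (by positivity)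
  nlinarith [mul_nonpos_of_nonneg_of_nonpos (mul_nonneg hη.le hy) hvy.2]

theorem exists_deriv_neg_of_le_min (hσ : 0 < σ) (hη : 0 < η) (hαh : 0 < αh) (hh : 0 < h)
    (hr : 0 < r) (hivp : IsIVP σ η αh h r a β v v')
    (hβ : β ≤ min 1 (h * r * σ ^ 2 / (4 * (1 + αh / 4 * r ^ 2 + |a| * r)))) :
    ∃ t, 0 ≤ t ∧ v' t < 0 := by
  by_contra! hv'
  set G := 1 + αh / 4 * r ^ 2 + |a| * r
  have hG : 0 < G := by positivity
  have hbound : ∀ y, 0 ≤ y → v y ≤ 0 → v' y ≤ 2 / σ ^ 2 * (G - h * y) := by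
    intro y hy hvy
    refine (hivp.deriv_le_of_mem_Icc hσ hη hαh hy
      ⟨hivp.le_of_forall_deriv_nonneg hv' hy, hvy⟩).trans ?_
    gcongr
    simp only [G]
    linarith [hβ.trans (min_le_left _ _)]
  set Y := G / h + 1
  have hY : 0 ≤ Y := by positivity
  by_cases hvY : v Y < 0
  · have : 2 / σ ^ 2 * (G - h * Y) < 0 :=
      mul_neg_of_pos_of_neg (by positivity) (by simp only [Y]; field_simp; linarith)
    linarith [hv' Y hY, hbound Y hY hvY.le]
  -- otherwise `v` climbs from `-r` to `0` at speed at most `2G/σ²`, which takes too long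
  obtain ⟨y₀, ⟨hy₀, -⟩, hvy₀, hneg⟩ := exists_first_root hY
    (hivp.continuousOn.mono Icc_subset_Ici_self) (by rw [hivp.2.2.2]; linarith) (not_lt.1 hvY)
  have hclimb := image_sub_le_mul_sub_of_hasDerivAt_le (c := 2 / σ ^ 2 * G) hy₀.le
    (hivp.continuousOn.mono Icc_subset_Ici_self) (fun x hx => hivp.hasDerivAt hx.1)
    (fun x hx => (hbound x hx.1.le (hneg x ⟨hx.1.le, hx.2⟩).le).trans
      (by gcongr; nlinarith [hx.1]))
  rw [hvy₀, hivp.2.2.2, sub_zero] at hclimb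
  have hβy₀ : β < h * y₀ := by
    calc β ≤ h * r * σ ^ 2 / (4 * G) := hβ.trans (min_le_right _ _)
      _ < h * r * σ ^ 2 / (2 * G) := by gcongr; linarith
      _ ≤ h * y₀ := by
        rw [div_le_iff₀ (by positivity)]
        have : r * σ ^ 2 ≤ 2 * G * y₀ := by
          have := mul_le_mul_of_nonneg_left hclimb (sq_nonneg σ)
          field_simp at this
          linarith
        nlinarith
  have hv'y₀ := hivp.deriv_eq hσ hy₀.le
  rw [hvy₀] at hv'y₀
  have : v' y₀ < 0 := by
    rw [hv'y₀]
    exact mul_neg_of_pos_of_neg (by positivity) (by field_simp; nlinarith)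
  linarith [hv' y₀ hy₀.le]

theorem exists_deriv_neg_of_mem_Ioc (hσ : 0 < σ) (hη : 0 < η) (hαh : 0 < αh) (hh : 0 < h)
    (hr : 0 < r) (hivp : IsIVP σ η αh h r a β v v')
    (hβ : β ∈ Ioc (-a * r - αh / 4 * r ^ 2) (-a * r - αh / 4 * r ^ 2 + σ ^ 2 / 4 *
      min (h / (4 * (αh * h / (4 * η) + η + |a|))) (min (h / (2 * σ ^ 2)) (h / (2 * η))))) :
    ∃ t, 0 ≤ t ∧ v' t < 0 := by
  set B := αh * h / (4 * η) + η + |a|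
  set ε := h / (4 * B)
  set A := h / (2 * σ ^ 2)
  set δ := h / (2 * η)
  have he₀ : v' 0 ≤ min ε (min A δ) / 2 := by
    rw [hivp.deriv_eq hσ le_rfl, hivp.2.2.2]
    have := hβ.2
    field_simp
    linarith
  have he₀pos : 0 < v' 0 := by
    rw [hivp.deriv_eq hσ le_rfl, hivp.2.2.2]
    exact mul_pos (by positivity) (by linarith [hβ.1])
  have hm : 0 < min ε (min A δ) := lt_min (by positivity) (lt_min (by positivity) (by positivity))
  have he₀A : v' 0 < A := by linarith [min_le_left A δ, min_le_right ε (min A δ)]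
  have he₀δ : v' 0 < δ := by linarith [min_le_right A δ, min_le_right ε (min A δ)]
  -- `v'' ≤ (2/σ²)(η (-r + δ) - h + B ε) = -A` while `0 ≤ v' < ε` and `v < -r + δ`
  have hconc : ∀ x ∈ Ioo (0:ℝ) 1, 0 ≤ v' x → v' x < ε → v x < v 0 + δ →
      2 / σ ^ 2 * (η * v x - h + (αh / 2 * v x + η * x - a) * v' x) ≤ -A := by
    intro x hx hv'0 hv'x hvx
    rw [hivp.2.2.2] at hvx
    have hP : (αh / 2 * v x + η * x - a) * v' x ≤ B * ε := by
      refine mul_le_mul ?_ hv'x.le hv'0 (by positivity)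
      have : αh / 2 * v x ≤ αh / 2 * δ :=
        mul_le_mul_of_nonneg_left (by linarith) (by positivity)
      have : η * x ≤ η := by nlinarith [hx.2]
      have : αh / 2 * δ = αh * h / (4 * η) := by simp only [δ]; field_simp; ring
      linarith [neg_abs_le a]
    have hBε : B * ε = h / 4 := by
      have : 0 < B := by positivity
      simp only [ε]
      field_simp
    have hηδ : η * δ = h / 2 := by simp only [δ]; field_simp
    have : η * v x ≤ η * (-r + δ) := mul_le_mul_of_nonneg_left hvx.le hη.le
    calc 2 / σ ^ 2 * (η * v x - h + (αh / 2 * v x + η * x - a) * v' x)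
        ≤ 2 / σ ^ 2 * (-(h / 4)) := mul_le_mul_of_nonneg_left (by nlinarith) (by positivity)
      _ = -A := by simp only [A]; field_simp; ring
  obtain ⟨t, ht, hv't⟩ := exists_deriv_neg_of_deriv_le_neg zero_lt_one
    (hivp.continuousOn.mono Icc_subset_Ici_self) (hivp.1.mono Icc_subset_Ici_self)
    (fun x hx => hivp.hasDerivAt hx.1) (fun x hx => hivp.hasDerivAt_deriv hσ hη hx.1) hconc
    (by linarith [min_le_left ε (min A δ)]) (by linarith) (by nlinarith)
  exact ⟨t, ht.1, hv't⟩

end IsIVP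

theorem memD_of_forall_exists_deriv_neg {σ η αh h r a β : ℝ} (hσ : 0 < σ) (hη : 0 < η)
    (hαh : 0 < αh) (hh : 0 < h) (hr : 0 < r)
    (hneg : ∀ v v', IsIVP σ η αh h r a β v v' → ∃ t, 0 ≤ t ∧ v' t < 0) :
    MemD σ η αh h r a β := fun v v' hivp =>
  exists_monotoneOn_Icc_strictAntiOn_Ici hivp.continuousOn (fun _ hx => hivp.hasDerivAt hx)
    (hneg v v' hivp) fun _ ht hv't _ hty =>
      hivp.deriv_neg_of_deriv_neg hσ hη hαh hh hr ht hv't hty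

/-- Nonemptiness of `𝓓`: in Case 1, `0 ∈ 𝓓` and `[0, β̃₁] ⊆ 𝓓` for some `β̃₁ > 0`;
in Case 2, `(β̲₂, β̃₂] ⊆ 𝓓` for some `β̃₂ > β̲₂`. -/
theorem stmt_14 (σ η αh h r a : ℝ) (hσ : 0 < σ) (hη : 0 < η) (hαh : 0 < αh)
    (hh : 0 < h) (hr : 0 < r) :
    (-(αh / 4) * r < a →
      MemD σ η αh h r a 0 ∧
      ∃ βt : ℝ, 0 < βt ∧ ∀ β ∈ Set.Icc (0:ℝ) βt, MemD σ η αh h r a β) ∧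
    (a ≤ -(αh / 4) * r →
      ∃ βt : ℝ, -a * r - αh / 4 * r ^ 2 < βt ∧
        ∀ β ∈ Set.Ioc (-a * r - αh / 4 * r ^ 2) βt, MemD σ η αh h r a β) := by
  set β₁ := min 1 (h * r * σ ^ 2 / (4 * (1 + αh / 4 * r ^ 2 + |a| * r)))
  have hβ₁ : 0 < β₁ := lt_min one_pos (by positivity)
  have hcase1 : ∀ β ≤ β₁, MemD σ η αh h r a β := fun β hβ =>
    memD_of_forall_exists_deriv_neg hσ hη hαh hh hr fun _ _ hivp =>
      hivp.exists_deriv_neg_of_le_min hσ hη hαh hh hr hβ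
  refine ⟨fun _ => ⟨hcase1 0 hβ₁.le, β₁, hβ₁, fun β hβ => hcase1 β hβ.2⟩,
    fun _ => ?_⟩
  have hm : 0 < min (h / (4 * (αh * h / (4 * η) + η + |a|)))
      (min (h / (2 * σ ^ 2)) (h / (2 * η))) :=
    lt_min (by positivity) (lt_min (by positivity) (by positivity))
  exact ⟨_, lt_add_of_pos_right _ (by positivity), fun β hβ =>
    memD_of_forall_exists_deriv_neg hσ hη hαh hh hr fun _ _ hivp =>
      hivp.exists_deriv_neg_of_mem_Ioc hσ hη hαh hh hr hβ⟩
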